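/- The Bol operator ∂^k is equivariant for the projective subalgebra: for every k ∈ ℕ, every X ∈ {∂, x∂, x²∂}, and every polynomial f ∈ ℂ[x], ∂^k(L_{(1−k)/2}(X)f) = L_{(1+k)/2}(X)(∂^k f), where L_ν(g∂)f = g·f′ + ν·g′·f. -/

import Mathlib

/-!
Differentiating `L_ν(g) f = g f' + ν g' f` once gives the commutation relation
`(L_ν(g) f)' = L_{ν+1}(g) f' + ν g'' f`, and iterating it for a quadratic `g` (so `g''' = 0`) yields
`∂^(n+1) (L_ν(g) f) = L_{ν+n+1}(g) ∂^(n+1) f + ((n+1) ν + C(n+1, 2)) g'' ∂^n f`.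
For the Bol weight `ν = -n/2` the error coefficient is `(n+1)(ν + n/2) = 0`.
-/

open Polynomial

section DensityAction

variable {R : Type*} [CommRing R]

/-- `L_ν(g ∂)`: the vector field `g ∂` acting on densities of weight `ν`. -/
noncomputable def densityAction (ν : R) (g f : R[X]) : R[X] :=
  g * derivative f + C ν * derivative g * f

theorem derivative_densityAction (ν : R) (g f : R[X]) :
    derivative (densityAction ν g f)
      = densityAction (ν + 1) g (derivative f) + C ν * derivative (derivative g) * f := by
  simp only [densityAction, derivative_add, derivative_mul, derivative_C, C_add, C_1]
  ring

theorem iterate_derivative_densityAction_succ {g : R[X]} (hg : g.natDegree ≤ 2)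
    (ν : R) (f : R[X]) (n : ℕ) :
    derivative^[n + 1] (densityAction ν g f)
      = densityAction (ν + (n + 1)) g (derivative^[n + 1] f)
        + C ((n + 1) * ν + (n + 1).choose 2) * derivative (derivative g) * derivative^[n] f := by
  have hg''' : derivative (derivative (derivative g)) = 0 :=
    iterate_derivative_eq_zero (x := 3) (by omega)
  induction n with
  | zero => simp [derivative_densityAction]
  | succ n ih =>
    have hchoose : (n + 1 + 1).choose 2 = (n + 1).choose 2 + (n + 1) := by
      rw [Nat.choose_succ_succ', Nat.choose_one_right, add_comm]
    rw [Function.iterate_succ_apply', ih, derivative_add, derivative_densityAction,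
      derivative_mul, derivative_mul, derivative_C, hg''', hchoose]
    simp only [Function.iterate_succ_apply', densityAction]
    push_cast
    simp only [C_add, C_mul, C_1]
    ring

end DensityAction

theorem bol_equivariant (k : ℕ) (g : Polynomial ℂ)
    (hg : g ∈ ({X, X ^ 2, 1} : Set (Polynomial ℂ))) (f : Polynomial ℂ) :
    derivative^[k] (g * derivative f + C ((1 - (k : ℂ)) / 2) * derivative g * f)
      = g * derivative (derivative^[k] f)
        + C ((1 + (k : ℂ)) / 2) * derivative g * derivative^[k] f := by
  have hdeg : g.natDegree ≤ 2 := by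
    rcases hg with rfl | rfl | rfl <;> simp
  change derivative^[k] (densityAction _ g f) = densityAction _ g (derivative^[k] f)
  cases k with
  | zero => simp [densityAction]
  | succ n =>
    have hcoeff : ((n : ℂ) + 1) * ((1 - ((n + 1 : ℕ) : ℂ)) / 2) + ((n + 1).choose 2 : ℕ) = 0 := by
      rw [Nat.cast_choose_two]
      push_cast
      ring
    rw [iterate_derivative_densityAction_succ hdeg, hcoeff, C_0, zero_mul, zero_mul, add_zero]
    congr 1
    push_cast
    ring
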